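/- arXiv:2012.13902 — 2 statements merged into one kernel-verified Lean document; each statement's English description precedes it below -/
import Mathlib

section
/- Let n ≥ 1 and V ∈ ℝⁿ. Define W : ℝ^{n+1} → ℝ^{n+1} by W(y) := y_0·((0,V) − ⟨y',V⟩·y) for y = (y_0, y'). Then: (1) ⟨W(y), y⟩ = 0 for every y ∈ S^n (W is tangent to the sphere); (2) W(y) = 0 whenever y_0 = 0; (3) for every x ∈ ℝⁿ, the derivative at t = 0 of the curve t ↦ Θ_n(x + tV) equals W(Θ_n(x)); (4) for every y ∈ S^n with y_0 ≥ 0, the derivative at t = 0 of the curve t ↦ f_{I,tV}(y) equals W(y), where f_{I,tV}(y) := (y_0, y' + t y_0 V)/‖(y_0, y' + t y_0 V)‖. In other words, the constant vector field V on ℝⁿ extends, via Θ_n, to a smooth vector field on the closed half-sphere S^n_1 (the spherical compactification) that vanishes on the boundary sphere at infinity, and this extension is the infinitesimal generator of the extended translation action. -/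
noncomputable section

/-- The euclidean norm on `ℝ^{n+1} = ℝ × ℝⁿ`. -/
def eNorm {n : ℕ} (y : ℝ × EuclideanSpace ℝ (Fin n)) : ℝ :=
  Real.sqrt (y.1 ^ 2 + ‖y.2‖ ^ 2)

/-- The map `Θ_n(x) = (1+‖x‖²)^{-1/2}(1, x)` into the sphere `S^n ⊂ ℝ × ℝⁿ`. -/
def thetaMap {n : ℕ} (x : EuclideanSpace ℝ (Fin n)) : ℝ × EuclideanSpace ℝ (Fin n) :=
  (Real.sqrt (1 + ‖x‖ ^ 2))⁻¹ • ((1 : ℝ), x)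

/-- The vector field `W(y) = y₀·((0,V) − ⟨y',V⟩·y)` on `ℝ^{n+1} = ℝ × ℝⁿ`. -/
def Wfield {n : ℕ} (V : EuclideanSpace ℝ (Fin n)) (y : ℝ × EuclideanSpace ℝ (Fin n)) :
    ℝ × EuclideanSpace ℝ (Fin n) :=
  y.1 • (((0 : ℝ), V) - (inner ℝ y.2 V : ℝ) • y)

/-! Both `Θ_n(x + tV)` and `f_{I,tV}(y)` are radial projections onto `S^n` of straight lines
through a point of the sphere. The derivative of the radial projection `z ↦ z / ‖z‖` at a unit
vector `z` in direction `v` is the tangential part `v - ⟨v, z⟩ z`; for the line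
`t ↦ (y₀, y' + t y₀ V)` this is exactly `W(y)`. -/

namespace SphericalCompactification

variable {n : ℕ}

def eNormalize (z : ℝ × EuclideanSpace ℝ (Fin n)) : ℝ × EuclideanSpace ℝ (Fin n) :=
  (eNorm z)⁻¹ • z

lemma eNorm_eq_sqrt_inner (z : ℝ × EuclideanSpace ℝ (Fin n)) :
    eNorm z = Real.sqrt (z.1 ^ 2 + inner ℝ z.2 z.2) := by
  rw [eNorm, real_inner_self_eq_norm_sq]

lemma sq_add_norm_sq_of_eNorm_eq_one {y : ℝ × EuclideanSpace ℝ (Fin n)} (hy : eNorm y = 1) :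
    y.1 ^ 2 + ‖y.2‖ ^ 2 = 1 := by
  rwa [eNorm, Real.sqrt_eq_one] at hy

lemma eNorm_smul_of_nonneg {c : ℝ} (hc : 0 ≤ c) (z : ℝ × EuclideanSpace ℝ (Fin n)) :
    eNorm (c • z) = c * eNorm z := by
  have hsq : (c * z.1) ^ 2 + (|c| * ‖z.2‖) ^ 2 = c ^ 2 * (z.1 ^ 2 + ‖z.2‖ ^ 2) := by
    rw [mul_pow, mul_pow, sq_abs]; ring
  rw [eNorm, eNorm, Prod.smul_fst, Prod.smul_snd, smul_eq_mul, norm_smul, Real.norm_eq_abs, hsq,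
    Real.sqrt_mul (sq_nonneg c), Real.sqrt_sq hc]

lemma eNormalize_smul_of_pos {c : ℝ} (hc : 0 < c) (z : ℝ × EuclideanSpace ℝ (Fin n)) :
    eNormalize (c • z) = eNormalize z := by
  rw [eNormalize, eNormalize, eNorm_smul_of_nonneg hc.le, smul_smul, mul_inv, mul_right_comm,
    inv_mul_cancel₀ hc.ne', one_mul]

lemma thetaMap_eq_eNormalize (x : EuclideanSpace ℝ (Fin n)) :
    thetaMap x = eNormalize ((1 : ℝ), x) := by
  rw [thetaMap, eNormalize, eNorm, one_pow]

lemma eNorm_thetaMap (x : EuclideanSpace ℝ (Fin n)) : eNorm (thetaMap x) = 1 := by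
  have hpos : 0 < eNorm ((1 : ℝ), x) := Real.sqrt_pos.mpr (by positivity)
  rw [thetaMap_eq_eNormalize, eNormalize, eNorm_smul_of_nonneg (inv_nonneg.mpr hpos.le),
    inv_mul_cancel₀ hpos.ne']

lemma Wfield_eq (V : EuclideanSpace ℝ (Fin n)) (y : ℝ × EuclideanSpace ℝ (Fin n)) :
    Wfield V y = ((0 : ℝ), y.1 • V) - (y.1 * inner ℝ y.2 V) • y := by
  rw [Wfield, smul_sub, Prod.smul_mk, smul_zero, smul_smul]

lemma Wfield_fst_mul_add_inner_snd (V : EuclideanSpace ℝ (Fin n))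
    {y : ℝ × EuclideanSpace ℝ (Fin n)} (hy : eNorm y = 1) :
    (Wfield V y).1 * y.1 + inner ℝ (Wfield V y).2 y.2 = 0 := by
  have hW1 : (Wfield V y).1 = y.1 * (0 - inner ℝ y.2 V * y.1) := rfl
  have hW2 : (Wfield V y).2 = y.1 • (V - (inner ℝ y.2 V : ℝ) • y.2) := rfl
  rw [hW1, hW2, real_inner_smul_left, inner_sub_left, real_inner_smul_left,
    real_inner_comm V y.2, real_inner_self_eq_norm_sq]
  linear_combination (-(y.1 * inner ℝ V y.2)) * sq_add_norm_sq_of_eNorm_eq_one hy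

lemma Wfield_of_fst_eq_zero (V : EuclideanSpace ℝ (Fin n)) {y : ℝ × EuclideanSpace ℝ (Fin n)}
    (hy : y.1 = 0) : Wfield V y = 0 := by
  rw [Wfield, hy, zero_smul]

lemma hasDerivAt_eNormalize_prodMk {a : ℝ → ℝ} {b : ℝ → EuclideanSpace ℝ (Fin n)} {a' : ℝ}
    {b' : EuclideanSpace ℝ (Fin n)} {t : ℝ} (ha : HasDerivAt a a' t) (hb : HasDerivAt b b' t)
    (h1 : eNorm (a t, b t) = 1) :
    HasDerivAt (fun s => eNormalize (a s, b s))
      ((a', b') - (a t * a' + inner ℝ (b t) b') • (a t, b t)) t := by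
  set k := a t * a' + inner ℝ (b t) b'
  have hsq : HasDerivAt (fun s => a s ^ 2 + inner ℝ (b s) (b s)) (2 * k) t := by
    refine ((ha.pow 2).add (hb.inner ℝ hb)).congr_deriv ?_
    push_cast
    rw [real_inner_comm (b t) b']
    ring
  have hq : a t ^ 2 + inner ℝ (b t) (b t) = 1 := by
    rw [← Real.sqrt_eq_one, ← eNorm_eq_sqrt_inner (a t, b t), h1]
  have hinv : HasDerivAt (fun s => (eNorm (a s, b s))⁻¹) (-k) t := by
    simp_rw [eNorm_eq_sqrt_inner]
    refine ((hsq.sqrt (by rw [hq]; exact one_ne_zero)).inv (by rw [hq]; simp)).congr_deriv ?_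
    rw [hq]
    simp
  refine (hinv.smul (ha.prodMk hb)).congr_deriv ?_
  rw [h1, inv_one, one_smul, neg_smul, sub_eq_add_neg, add_comm]

lemma hasDerivAt_eNormalize_translate (V : EuclideanSpace ℝ (Fin n))
    {y : ℝ × EuclideanSpace ℝ (Fin n)} (hy : eNorm y = 1) :
    HasDerivAt (fun t : ℝ => eNormalize (y.1, y.2 + (t * y.1) • V)) (Wfield V y) 0 := by
  have hline : HasDerivAt (fun t : ℝ => y.2 + (t * y.1) • V) (y.1 • V) 0 := by
    simpa [mul_smul] using ((hasDerivAt_id (0 : ℝ)).smul_const (y.1 • V)).const_add y.2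
  refine (hasDerivAt_eNormalize_prodMk (hasDerivAt_const 0 y.1) hline (by simpa using hy)).congr_deriv ?_
  rw [Wfield_eq]
  simp [real_inner_smul_right]

lemma thetaMap_add_smul (x V : EuclideanSpace ℝ (Fin n)) (t : ℝ) :
    thetaMap (x + t • V) =
      eNormalize ((thetaMap x).1, (thetaMap x).2 + (t * (thetaMap x).1) • V) := by
  set r := eNorm ((1 : ℝ), x)
  have hr : 0 < r⁻¹ := inv_pos.mpr (Real.sqrt_pos.mpr (by positivity))
  have hline : (((thetaMap x).1, (thetaMap x).2 + (t * (thetaMap x).1) • V) :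
      ℝ × EuclideanSpace ℝ (Fin n)) = r⁻¹ • ((1 : ℝ), x + t • V) := by
    rw [thetaMap_eq_eNormalize, eNormalize, Prod.smul_mk, Prod.smul_mk, smul_eq_mul, mul_one,
      smul_add, smul_smul, mul_comm t]
  rw [hline, eNormalize_smul_of_pos hr, thetaMap_eq_eNormalize]

end SphericalCompactification

open SphericalCompactification in
theorem statement6_general (n : ℕ) (V : EuclideanSpace ℝ (Fin n)) :
    (∀ y : ℝ × EuclideanSpace ℝ (Fin n), eNorm y = 1 →
      (Wfield V y).1 * y.1 + (inner ℝ (Wfield V y).2 y.2 : ℝ) = 0) ∧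
    (∀ y : ℝ × EuclideanSpace ℝ (Fin n), y.1 = 0 → Wfield V y = 0) ∧
    (∀ x : EuclideanSpace ℝ (Fin n),
      HasDerivAt (fun t : ℝ => thetaMap (x + t • V)) (Wfield V (thetaMap x)) 0) ∧
    (∀ y : ℝ × EuclideanSpace ℝ (Fin n), eNorm y = 1 → 0 ≤ y.1 →
      HasDerivAt
        (fun t : ℝ => (eNorm (y.1, y.2 + (t * y.1) • V))⁻¹ •
          ((y.1, y.2 + (t * y.1) • V) : ℝ × EuclideanSpace ℝ (Fin n)))
        (Wfield V y) 0) := by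
  refine ⟨fun y hy => Wfield_fst_mul_add_inner_snd V hy,
    fun y hy => Wfield_of_fst_eq_zero V hy, fun x => ?_,
    fun y hy _ => hasDerivAt_eNormalize_translate V hy⟩
  simp_rw [thetaMap_add_smul x V]
  exact hasDerivAt_eNormalize_translate V (eNorm_thetaMap x)

/-- The constant vector field `V` on `ℝⁿ` extends via `Θ_n` to the
vector field `W` on the spherical compactification: `W` is tangent to `S^n`, vanishes
on the sphere at infinity `{y₀ = 0}`, is `Θ_n`-related to the constant field `V`, and is
the infinitesimal generator of the extended translation action. -/
theorem statement6 (n : ℕ) (hn : 1 ≤ n) (V : EuclideanSpace ℝ (Fin n)) :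
    (∀ y : ℝ × EuclideanSpace ℝ (Fin n), eNorm y = 1 →
      (Wfield V y).1 * y.1 + (inner ℝ (Wfield V y).2 y.2 : ℝ) = 0) ∧
    (∀ y : ℝ × EuclideanSpace ℝ (Fin n), y.1 = 0 → Wfield V y = 0) ∧
    (∀ x : EuclideanSpace ℝ (Fin n),
      HasDerivAt (fun t : ℝ => thetaMap (x + t • V)) (Wfield V (thetaMap x)) 0) ∧
    (∀ y : ℝ × EuclideanSpace ℝ (Fin n), eNorm y = 1 → 0 ≤ y.1 →
      HasDerivAt
        (fun t : ℝ => (eNorm (y.1, y.2 + (t * y.1) • V))⁻¹ •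
          ((y.1, y.2 + (t * y.1) • V) : ℝ × EuclideanSpace ℝ (Fin n)))
        (Wfield V y) 0) :=
  statement6_general n V
end
end

section
/- Let m ≥ 1, m' ≥ 0, 0 ≤ k ≤ m and 0 ≤ k' ≤ m'+1. Set ℝ^m_k := [0,∞)^k × ℝ^{m−k}, let S^{m+m'} be the unit sphere of ℝ^{m+m'+1} = ℝ^m × ℝ^{m'+1}, with points written (η,μ), η ∈ ℝ^m, μ ∈ ℝ^{m'+1}, and set S^{m,m'}_{k,k'} := S^{m+m'} ∩ (ℝ^m_k × ℝ^{m'+1}_{k'}). Define Ψ(η,μ) := ( η/‖η‖ , (‖η‖, μ) ). Then Ψ is a bijection from {(η,μ) ∈ S^{m,m'}_{k,k'} : η ≠ 0} onto S^{m−1}_k × {(r,μ) ∈ S^{m'+1}_{k'+1} : r > 0}, where S^{m−1}_k := S^{m−1} ∩ ℝ^m_k and S^{m'+1}_{k'+1} := S^{m'+1} ∩ ([0,∞) × ℝ^{m'+1}_{k'}) ⊂ ℝ × ℝ^{m'+1}; the inverse of Ψ is (a, (r,μ)) ↦ (r·a, μ), and both Ψ and its inverse are restrictions of smooth maps defined on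 open subsets of the ambient euclidean spaces. -/
noncomputable section

/-- The model orthant `ℝ^m_k = [0,∞)^k × ℝ^{m−k}` inside `ℝ^m`. -/
def orthant (m k : ℕ) : Set (EuclideanSpace ℝ (Fin m)) :=
  {x | ∀ i : Fin m, (i : ℕ) < k → 0 ≤ x i}

/-- The set `S^{m,m'}_{k,k'} ∖ ({0} × S^{m'}_{k'})`, i.e. points `(η,μ)` of the sphere
in `ℝ^m × ℝ^{m'+1}` belonging to `ℝ^m_k × ℝ^{m'+1}_{k'}` with `η ≠ 0`. -/
def sourceSet (m m' k k' : ℕ) :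
    Set (EuclideanSpace ℝ (Fin m) × EuclideanSpace ℝ (Fin (m' + 1))) :=
  {q | ‖q.1‖ ^ 2 + ‖q.2‖ ^ 2 = 1 ∧ q.1 ∈ orthant m k ∧ q.2 ∈ orthant (m' + 1) k' ∧ q.1 ≠ 0}

/-- The set `S^{m−1}_k × {(r,μ) ∈ S^{m'+1}_{k'+1} : r > 0}`. -/
def targetSet (m m' k k' : ℕ) :
    Set (EuclideanSpace ℝ (Fin m) × (ℝ × EuclideanSpace ℝ (Fin (m' + 1)))) :=
  {w | (‖w.1‖ = 1 ∧ w.1 ∈ orthant m k) ∧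
    (w.2.1 ^ 2 + ‖w.2.2‖ ^ 2 = 1 ∧ 0 < w.2.1 ∧ w.2.2 ∈ orthant (m' + 1) k')}

/-- The splitting map `Ψ(η,μ) = (η/‖η‖, (‖η‖, μ))`. -/
def psiSplit (m m' : ℕ)
    (q : EuclideanSpace ℝ (Fin m) × EuclideanSpace ℝ (Fin (m' + 1))) :
    EuclideanSpace ℝ (Fin m) × (ℝ × EuclideanSpace ℝ (Fin (m' + 1))) :=
  (‖q.1‖⁻¹ • q.1, (‖q.1‖, q.2))

/-- The inverse map `(a, (r, μ)) ↦ (r·a, μ)`. -/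
def psiInv (m m' : ℕ)
    (w : EuclideanSpace ℝ (Fin m) × (ℝ × EuclideanSpace ℝ (Fin (m' + 1)))) :
    EuclideanSpace ℝ (Fin m) × EuclideanSpace ℝ (Fin (m' + 1)) :=
  (w.2.1 • w.1, w.2.2)

lemma smul_mem_orthant {m k : ℕ} {c : ℝ} (hc : 0 ≤ c) {x : EuclideanSpace ℝ (Fin m)}
    (hx : x ∈ orthant m k) : c • x ∈ orthant m k :=
  fun i hi => mul_nonneg hc (hx i hi)

lemma contDiffOn_inv_norm_smul {E : Type*} [NormedAddCommGroup E] [InnerProductSpace ℝ E]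
    {n : WithTop ℕ∞} : ContDiffOn ℝ n (fun x : E => ‖x‖⁻¹ • x) {x | x ≠ 0} :=
  ((contDiffOn_id.norm ℝ fun _ hx => hx).inv fun x (hx : x ≠ 0) => norm_ne_zero_iff.mpr hx).smul
    contDiffOn_id

section Splitting

variable {m m' k k' : ℕ}

lemma psiSplit_mapsTo :
    Set.MapsTo (psiSplit m m') (sourceSet m m' k k') (targetSet m m' k k') := by
  rintro ⟨η, μ⟩ ⟨hsphere, hη, hμ, hη0⟩
  have hpos : 0 < ‖η‖ := norm_pos_iff.mpr hη0
  exact ⟨⟨norm_smul_inv_norm hη0, smul_mem_orthant (inv_nonneg.mpr hpos.le) hη⟩,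
    hsphere, hpos, hμ⟩

lemma psiInv_mapsTo :
    Set.MapsTo (psiInv m m') (targetSet m m' k k') (sourceSet m m' k k') := by
  rintro ⟨a, r, μ⟩ ⟨⟨ha, ha_mem⟩, hsphere, hr, hμ⟩
  have ha0 : a ≠ 0 := by rintro rfl; simp at ha
  refine ⟨?_, smul_mem_orthant hr.le ha_mem, hμ, smul_ne_zero hr.ne' ha0⟩
  simpa [psiInv, norm_smul, abs_of_pos hr, ha] using hsphere

lemma psiInv_invOn :
    Set.InvOn (psiInv m m') (psiSplit m m') (sourceSet m m' k k') (targetSet m m' k k') := by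
  constructor
  · rintro ⟨η, μ⟩ ⟨-, -, -, hη0⟩
    simp [psiSplit, psiInv, smul_smul, mul_inv_cancel₀ (norm_ne_zero_iff.mpr hη0)]
  · rintro ⟨a, r, μ⟩ ⟨⟨ha, -⟩, -, hr, -⟩
    have hnorm : ‖r • a‖ = r := by rw [norm_smul, ha, mul_one, Real.norm_of_nonneg hr.le]
    simp [psiSplit, psiInv, hnorm, smul_smul, inv_mul_cancel₀ hr.ne']

lemma psiSplit_bijOn :
    Set.BijOn (psiSplit m m') (sourceSet m m' k k') (targetSet m m' k k') :=
  psiInv_invOn.bijOn psiSplit_mapsTo psiInv_mapsTo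

lemma psiSplit_contDiffOn {n : WithTop ℕ∞} :
    ContDiffOn ℝ n (psiSplit m m') {q | q.1 ≠ 0} :=
  (contDiffOn_inv_norm_smul.comp contDiff_fst.contDiffOn fun _ hq => hq).prodMk
    ((contDiff_fst.contDiffOn.norm ℝ fun _ hq => hq).prodMk contDiff_snd.contDiffOn)

lemma psiInv_contDiff {n : WithTop ℕ∞} : ContDiff ℝ n (psiInv m m') :=
  ((contDiff_fst.comp contDiff_snd).smul contDiff_fst).prodMk (contDiff_snd.comp contDiff_snd)

end Splitting

theorem statement9_general (m m' k k' : ℕ) :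
    Set.BijOn (psiSplit m m') (sourceSet m m' k k') (targetSet m m' k k') ∧
    Set.InvOn (psiInv m m') (psiSplit m m')
      (sourceSet m m' k k') (targetSet m m' k k') ∧
    ContDiffOn ℝ (⊤ : ℕ∞) (psiSplit m m')
      {q : EuclideanSpace ℝ (Fin m) × EuclideanSpace ℝ (Fin (m' + 1)) | q.1 ≠ 0} ∧
    IsOpen {q : EuclideanSpace ℝ (Fin m) × EuclideanSpace ℝ (Fin (m' + 1)) | q.1 ≠ 0} ∧
    sourceSet m m' k k' ⊆
      {q : EuclideanSpace ℝ (Fin m) × EuclideanSpace ℝ (Fin (m' + 1)) | q.1 ≠ 0} ∧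
    ContDiff ℝ (⊤ : ℕ∞) (psiInv m m') :=
  ⟨psiSplit_bijOn, psiInv_invOn, psiSplit_contDiffOn,
    isOpen_compl_singleton.preimage continuous_fst, fun _ hq => hq.2.2.2, psiInv_contDiff⟩

/-- `Ψ(η,μ) = (η/‖η‖, (‖η‖,μ))` is a bijection from
`{(η,μ) ∈ S^{m,m'}_{k,k'} : η ≠ 0}` onto `S^{m−1}_k × {(r,μ) ∈ S^{m'+1}_{k'+1} : r > 0}`
with inverse `(a,(r,μ)) ↦ (r·a, μ)`; both are restrictions of smooth maps defined on
open subsets of the ambient euclidean spaces. -/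
theorem statement9 (m m' k k' : ℕ) (hm : 1 ≤ m) (hk : k ≤ m) (hk' : k' ≤ m' + 1) :
    Set.BijOn (psiSplit m m') (sourceSet m m' k k') (targetSet m m' k k') ∧
    Set.InvOn (psiInv m m') (psiSplit m m')
      (sourceSet m m' k k') (targetSet m m' k k') ∧
    ContDiffOn ℝ (⊤ : ℕ∞) (psiSplit m m')
      {q : EuclideanSpace ℝ (Fin m) × EuclideanSpace ℝ (Fin (m' + 1)) | q.1 ≠ 0} ∧
    IsOpen {q : EuclideanSpace ℝ (Fin m) × EuclideanSpace ℝ (Fin (m' + 1)) | q.1 ≠ 0} ∧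
    sourceSet m m' k k' ⊆
      {q : EuclideanSpace ℝ (Fin m) × EuclideanSpace ℝ (Fin (m' + 1)) | q.1 ≠ 0} ∧
    ContDiff ℝ (⊤ : ℕ∞) (psiInv m m') :=
  statement9_general m m' k k'
end
end
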